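/- arXiv:2209.03623 — 2 statements merged into one kernel-verified Lean document; each statement's English description precedes it below -/
import Mathlib

section
/- Let π be a Borel probability measure on ℙ(V), let η ∈ (0,1) and C > 0 be such that ∫_{ℙ(V)} δ(x,y)^{−η} π(dx) ≤ C for every y ∈ ℙ(V*). Then for every γ ∈ (0, η/2] there exists a constant c > 0, depending only on γ, η and C, such that for every bounded Borel function φ on ℙ(V) and all y', y'' ∈ ℙ(V*): | d_φ(y') − d_φ(y'') | ≤ c·‖φ‖_∞·d(y',y'')^γ, where d_φ(y) := ∫_{ℙ(V)} φ(x) log δ(x,y) π(dx). Consequently d_φ is γ-Hölder continuous on ℙ(V*) and ‖d_φ‖_∞ + sup_{y'≠y''} |d_φ(y')−d_φ(y'')|/d(y',y'')^γ ≤ c'·‖φ‖_∞ for a constant c' depending only on γ, η, C. -/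
open MeasureTheory Real Filter
open scoped InnerProductSpace ENNReal Topology

noncomputable section

abbrev V (d : ℕ) := EuclideanSpace ℝ (Fin d)
abbrev PV (d : ℕ) := Projectivization ℝ (V d)

/-- `δ(x,y) = |⟨f,v⟩| / (‖f‖‖v‖)` for `x = ℝv ∈ ℙ(V)` and `y = ℝf ∈ ℙ(V*)`, where the
dual space `V*` is identified with `V = ℝ^d` via the Euclidean inner product. -/
def delta (d : ℕ) (x y : PV d) : ℝ := |⟪y.rep, x.rep⟫_ℝ| / (‖y.rep‖ * ‖x.rep‖)

/-- The angular distance `d(x,x') = ‖v ∧ v'‖/(‖v‖‖v'‖)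
  = sqrt(‖v‖²‖v'‖² − ⟨v,v'⟩²)/(‖v‖‖v'‖)` on the projective space. -/
def angDist (d : ℕ) (x x' : PV d) : ℝ :=
  Real.sqrt (‖x.rep‖ ^ 2 * ‖x'.rep‖ ^ 2 - ⟪x.rep, x'.rep⟫_ℝ ^ 2) / (‖x.rep‖ * ‖x'.rep‖)

instance (d : ℕ) : MeasurableSpace (PV d) :=
  @Quotient.instMeasurableSpace _ (projectivizationSetoid ℝ (V d)) _
instance (d : ℕ) : TopologicalSpace (PV d) :=
  @instTopologicalSpaceQuotient _ (projectivizationSetoid ℝ (V d)) _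

/-- Sup norm `‖φ‖_∞` of a function on the projective space. -/
def supNorm (d : ℕ) (φ : PV d → ℝ) : ℝ := ⨆ x, |φ x|

open Classical in
/-- The ratio appearing in the γ-Hölder seminorm. -/
def holderRatio (d : ℕ) (γ : ℝ) (φ : PV d → ℝ) (p : PV d × PV d) : ℝ :=
  if p.1 = p.2 then 0 else |φ p.1 - φ p.2| / angDist d p.1 p.2 ^ γ

/-- γ-Hölder seminorm `[φ]_γ`. -/
def holderSemi (d : ℕ) (γ : ℝ) (φ : PV d → ℝ) : ℝ := ⨆ p, holderRatio d γ φ p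

/-- The norm `‖φ‖_γ = ‖φ‖_∞ + [φ]_γ` of the Banach space `B_γ`. -/
def holderNorm (d : ℕ) (γ : ℝ) (φ : PV d → ℝ) : ℝ := supNorm d φ + holderSemi d γ φ

/-- Membership in `B_γ` (finiteness of `‖φ‖_γ`). -/
def MemBgamma (d : ℕ) (γ : ℝ) (φ : PV d → ℝ) : Prop :=
  BddAbove (Set.range fun x => |φ x|) ∧ BddAbove (Set.range (holderRatio d γ φ))

namespace HolderAux

open Projectivization

variable {d : ℕ}

lemma norm_rep_pos (x : PV d) : 0 < ‖x.rep‖ := norm_pos_iff.mpr x.rep_nonzero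

lemma delta_nonneg (x y : PV d) : 0 ≤ delta d x y :=
  div_nonneg (abs_nonneg _) (by positivity)

lemma delta_le_one (x y : PV d) : delta d x y ≤ 1 := by
  rw [delta, div_le_one (mul_pos (norm_rep_pos y) (norm_rep_pos x))]
  exact abs_real_inner_le_norm _ _

lemma delta_eq_unit (x y : PV d) :
    delta d x y = |⟪‖y.rep‖⁻¹ • y.rep, ‖x.rep‖⁻¹ • x.rep⟫_ℝ| := by
  rw [delta, real_inner_smul_left, real_inner_smul_right, abs_mul, abs_mul,
    abs_inv, abs_inv, abs_norm, abs_norm, div_eq_mul_inv, mul_inv]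
  ring

lemma inner_sq_le (u w : V d) : ⟪u, w⟫_ℝ ^ 2 ≤ (‖u‖ * ‖w‖) ^ 2 := by
  rw [← sq_abs]
  exact pow_le_pow_left₀ (abs_nonneg _) (abs_real_inner_le_norm _ _) 2

lemma angDist_eq_unit (y y' : PV d) :
    angDist d y y' = Real.sqrt (1 - ⟪‖y.rep‖⁻¹ • y.rep, ‖y'.rep‖⁻¹ • y'.rep⟫_ℝ ^ 2) := by
  have hy := norm_rep_pos y
  have hy' := norm_rep_pos y'
  have hA := inner_sq_le y.rep y'.rep
  rw [real_inner_smul_left, real_inner_smul_right]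
  have h1 : (1 : ℝ) - (‖y.rep‖⁻¹ * (‖y'.rep‖⁻¹ * ⟪y.rep, y'.rep⟫_ℝ)) ^ 2
      = (‖y.rep‖ ^ 2 * ‖y'.rep‖ ^ 2 - ⟪y.rep, y'.rep⟫_ℝ ^ 2) / (‖y.rep‖ * ‖y'.rep‖) ^ 2 := by
    field_simp
  rw [h1, Real.sqrt_div (by nlinarith), Real.sqrt_sq (by positivity), angDist]

lemma key_unit (u w z : V d) (hu : ‖u‖ = 1) (hw : ‖w‖ = 1) (hz : ‖z‖ = 1)
    (hc : 0 ≤ ⟪u, w⟫_ℝ) :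
    |(|⟪u, z⟫_ℝ| - |⟪w, z⟫_ℝ|)| ≤ Real.sqrt 2 * Real.sqrt (1 - ⟪u, w⟫_ℝ ^ 2) := by
  have hc1 : ⟪u, w⟫_ℝ ≤ 1 := by
    have := real_inner_le_norm u w
    rwa [hu, hw, one_mul] at this
  have h1 : |(|⟪u, z⟫_ℝ| - |⟪w, z⟫_ℝ|)| ≤ ‖u - w‖ := by
    calc |(|⟪u, z⟫_ℝ| - |⟪w, z⟫_ℝ|)| ≤ |⟪u, z⟫_ℝ - ⟪w, z⟫_ℝ| := abs_abs_sub_abs_le_abs_sub _ _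
      _ = |⟪u - w, z⟫_ℝ| := by rw [← inner_sub_left]
      _ ≤ ‖u - w‖ * ‖z‖ := abs_real_inner_le_norm _ _
      _ = ‖u - w‖ := by rw [hz, mul_one]
  have h2 : ‖u - w‖ = Real.sqrt (2 - 2 * ⟪u, w⟫_ℝ) := by
    have hsq := norm_sub_sq_real u w
    rw [hu, hw] at hsq
    rw [← Real.sqrt_sq (norm_nonneg (u - w)), hsq]
    congr 1
    ring
  have h3 : Real.sqrt (2 - 2 * ⟪u, w⟫_ℝ) ≤ Real.sqrt 2 * Real.sqrt (1 - ⟪u, w⟫_ℝ ^ 2) := by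
    rw [← Real.sqrt_mul (by norm_num : (0:ℝ) ≤ 2)]
    apply Real.sqrt_le_sqrt
    nlinarith
  calc |(|⟪u, z⟫_ℝ| - |⟪w, z⟫_ℝ|)| ≤ ‖u - w‖ := h1
    _ = Real.sqrt (2 - 2 * ⟪u, w⟫_ℝ) := h2
    _ ≤ _ := h3

lemma key_unit' (u w z : V d) (hu : ‖u‖ = 1) (hw : ‖w‖ = 1) (hz : ‖z‖ = 1) :
    |(|⟪u, z⟫_ℝ| - |⟪w, z⟫_ℝ|)| ≤ Real.sqrt 2 * Real.sqrt (1 - ⟪u, w⟫_ℝ ^ 2) := by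
  rcases le_or_gt 0 ⟪u, w⟫_ℝ with h | h
  · exact key_unit u w z hu hw hz h
  · have := key_unit u (-w) z hu (by rwa [norm_neg]) hz
      (by rw [inner_neg_right]; linarith)
    rwa [inner_neg_left, abs_neg, inner_neg_right, neg_sq] at this

lemma abs_delta_sub_delta_le (x y y' : PV d) :
    |delta d x y - delta d x y'| ≤ Real.sqrt 2 * angDist d y y' := by
  rw [delta_eq_unit x y, delta_eq_unit x y', angDist_eq_unit]
  exact key_unit' _ _ _ (norm_smul_inv_norm y.rep_nonzero)
    (norm_smul_inv_norm y'.rep_nonzero) (norm_smul_inv_norm x.rep_nonzero)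

lemma angDist_nonneg (y y' : PV d) : 0 ≤ angDist d y y' :=
  div_nonneg (Real.sqrt_nonneg _) (by positivity)

lemma angDist_pos_of_ne {y y' : PV d} (h : y ≠ y') : 0 < angDist d y y' := by
  have hy := norm_rep_pos y
  have hy' := norm_rep_pos y'
  apply div_pos _ (mul_pos hy hy')
  apply Real.sqrt_pos.mpr
  have hA := inner_sq_le y.rep y'.rep
  rcases lt_or_ge (⟪y.rep, y'.rep⟫_ℝ ^ 2) (‖y.rep‖ ^ 2 * ‖y'.rep‖ ^ 2) with hlt | hge
  · linarith
  exfalso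
  apply h
  have habs : |⟪y.rep, y'.rep⟫_ℝ| = ‖y.rep‖ * ‖y'.rep‖ := by
    have h1 : |⟪y.rep, y'.rep⟫_ℝ| ≤ ‖y.rep‖ * ‖y'.rep‖ := abs_real_inner_le_norm _ _
    have h2 : (‖y.rep‖ * ‖y'.rep‖) ^ 2 ≤ |⟪y.rep, y'.rep⟫_ℝ| ^ 2 := by
      rw [sq_abs]; nlinarith
    nlinarith [abs_nonneg ⟪y.rep, y'.rep⟫_ℝ]
  have hdiv : |⟪y.rep, y'.rep⟫_ℝ / (‖y.rep‖ * ‖y'.rep‖)| = 1 := by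
    rw [abs_div, habs, abs_of_pos (mul_pos hy hy'), div_self (mul_pos hy hy').ne']
  obtain ⟨-, r, hr, hry⟩ := (abs_real_inner_div_norm_mul_norm_eq_one_iff _ _).mp hdiv
  have key : ∃ a : ℝ, a • y'.rep = y.rep :=
    ⟨r⁻¹, by rw [hry, inv_smul_smul₀ hr]⟩
  obtain ⟨a, ha⟩ := key
  conv_lhs => rw [← Projectivization.mk_rep y]
  conv_rhs => rw [← Projectivization.mk_rep y']
  rw [Projectivization.mk_eq_mk_iff']
  exact ⟨a, ha⟩

lemma log_le_rpow {u s : ℝ} (hu : 1 ≤ u) (hs : 0 < s) : Real.log u ≤ (u ^ s - 1) / s := by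
  have h0 : (0:ℝ) < u := lt_of_lt_of_le one_pos hu
  have h := Real.log_le_sub_one_of_pos (Real.rpow_pos_of_pos h0 s)
  rw [Real.log_rpow h0] at h
  rw [le_div_iff₀ hs, mul_comm]
  linarith

lemma abs_log_le {a s : ℝ} (ha : 0 < a) (ha1 : a ≤ 1) (hs : 0 < s) :
    |Real.log a| ≤ a ^ (-s) / s := by
  have h1 : 1 ≤ a⁻¹ := (one_le_inv₀ ha).mpr ha1
  have h := log_le_rpow h1 hs
  rw [Real.log_inv, Real.inv_rpow ha.le, ← Real.rpow_neg ha.le] at h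
  have hpos : 0 < a ^ (-s) := Real.rpow_pos_of_pos ha (-s)
  rw [abs_of_nonpos (Real.log_nonpos ha.le ha1)]
  have h2 : (a ^ (-s) - 1) / s ≤ a ^ (-s) / s := by
    gcongr
    linarith
  linarith

lemma rpow_sub_rpow_le {a b s : ℝ} (hb : 0 ≤ b) (hab : b ≤ a) (hs : 0 ≤ s) (hs1 : s ≤ 1) :
    a ^ s - b ^ s ≤ (a - b) ^ s := by
  have h0 : (0:ℝ) ≤ a - b := by linarith
  have h := NNReal.rpow_add_le_add_rpow ((a - b).toNNReal) (b.toNNReal) hs hs1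
  rw [← Real.toNNReal_add h0 hb, sub_add_cancel] at h
  have h' := NNReal.coe_le_coe.mpr h
  push_cast [Real.coe_toNNReal _ (by linarith : (0:ℝ) ≤ a), Real.coe_toNNReal _ h0,
    Real.coe_toNNReal _ hb] at h'
  linarith

lemma abs_log_sub_log_le {a b s : ℝ} (ha : 0 < a) (hb : 0 < b) (hs : 0 < s) (hs1 : s ≤ 1) :
    |Real.log a - Real.log b| ≤ |a - b| ^ s * (a ^ (-s) + b ^ (-s)) / s := by
  suffices H : ∀ a b : ℝ, 0 < a → 0 < b → b ≤ a →
      Real.log a - Real.log b ≤ |a - b| ^ s * (a ^ (-s) + b ^ (-s)) / s by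
    rcases le_total b a with h | h
    · rw [abs_of_nonneg (sub_nonneg.mpr (Real.log_le_log hb h))]
      exact H a b ha hb h
    · rw [abs_sub_comm, abs_sub_comm a b, add_comm,
        abs_of_nonneg (sub_nonneg.mpr (Real.log_le_log ha h))]
      exact H b a hb ha h
  intro a b ha hb hba
  have hbs : 0 < b ^ s := Real.rpow_pos_of_pos hb s
  have has : 0 < a ^ s := Real.rpow_pos_of_pos ha s
  have hZ : 0 ≤ (a - b) ^ s := Real.rpow_nonneg (by linarith) s
  have h2 : Real.log (a / b) ≤ ((a / b) ^ s - 1) / s :=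
    log_le_rpow ((one_le_div hb).mpr hba) hs
  have h4 : a ^ s - b ^ s ≤ (a - b) ^ s := rpow_sub_rpow_le hb.le hba hs.le hs1
  have step : (a / b) ^ s - 1 ≤ (a - b) ^ s * (a ^ (-s) + b ^ (-s)) := by
    rw [Real.div_rpow ha.le hb.le, Real.rpow_neg ha.le, Real.rpow_neg hb.le,
      div_sub_one hbs.ne', div_le_iff₀ hbs]
    have expand : (a - b) ^ s * ((a ^ s)⁻¹ + (b ^ s)⁻¹) * b ^ s
        = (a - b) ^ s * (b ^ s / a ^ s) + (a - b) ^ s := by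
      field_simp
    rw [expand]
    have hnn : 0 ≤ (a - b) ^ s * (b ^ s / a ^ s) := by positivity
    linarith
  calc Real.log a - Real.log b = Real.log (a / b) := (Real.log_div ha.ne' hb.ne').symm
    _ ≤ ((a / b) ^ s - 1) / s := h2
    _ ≤ (a - b) ^ s * (a ^ (-s) + b ^ (-s)) / s := by
        gcongr
    _ = |a - b| ^ s * (a ^ (-s) + b ^ (-s)) / s := by
        rw [abs_of_nonneg (by linarith : (0:ℝ) ≤ a - b)]

lemma delta_mk (v : V d) (hv : v ≠ 0) (y : PV d) :
    delta d (Projectivization.mk ℝ v hv) y = |⟪y.rep, v⟫_ℝ| / (‖y.rep‖ * ‖v‖) := by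
  obtain ⟨a, ha⟩ := (Projectivization.mk_eq_mk_iff ℝ _ _
      (Projectivization.rep_nonzero _) hv).mp
      (Projectivization.mk_rep (Projectivization.mk ℝ v hv))
  rw [delta, ← ha, Units.smul_def, real_inner_smul_right, norm_smul, Real.norm_eq_abs,
    abs_mul, show ‖y.rep‖ * (|(a:ℝ)| * ‖v‖) = |(a:ℝ)| * (‖y.rep‖ * ‖v‖) by ring,
    mul_div_mul_left _ _ (abs_ne_zero.mpr a.ne_zero)]

lemma measurable_delta (y : PV d) : Measurable (fun x : PV d => delta d x y) := by
  haveI : OpensMeasurableSpace {v : V d // v ≠ 0} :=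
    Subtype.opensMeasurableSpace {v : V d | v ≠ 0}
  have hcont : Continuous fun v : {v : V d // v ≠ 0} =>
      |⟪y.rep, (v : V d)⟫_ℝ| / (‖y.rep‖ * ‖(v : V d)‖) := by
    apply Continuous.div
    · exact (continuous_const.inner continuous_subtype_val).abs
    · exact continuous_const.mul continuous_subtype_val.norm
    · intro v
      exact (mul_pos (norm_rep_pos y) (norm_pos_iff.mpr v.2)).ne'
  have heq : ((fun x : PV d => delta d x y) ∘
      (Quotient.mk'' : {v : V d // v ≠ 0} → PV d))
      = fun v : {v : V d // v ≠ 0} => |⟪y.rep, (v : V d)⟫_ℝ| / (‖y.rep‖ * ‖(v : V d)‖) := by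
    funext v
    exact delta_mk v.1 v.2 y
  exact measurable_from_quotient.mpr (heq ▸ hcont.measurable)

lemma measurable_rpow_delta (y : PV d) (s : ℝ) :
    Measurable fun x : PV d => ENNReal.ofReal (delta d x y) ^ s :=
  ((measurable_delta y).ennreal_ofReal).pow_const _

end HolderAux

open HolderAux

/-- Hölder regularity of `y ↦ d_φ(y) = ∫ φ(x) log δ(x,y) dπ(x)` (Lemma 3.4 of
Xiao–Grama–Liu, `s = 0` case): there are constants `c, c' > 0` depending only on
`γ, η, C` such that `|d_φ(y') − d_φ(y'')| ≤ c‖φ‖_∞ d(y',y'')^γ` and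
`‖d_φ‖_γ ≤ c'‖φ‖_∞`. -/
theorem holder_regularity_d_phi
    (d : ℕ) (hd : 1 ≤ d)
    (η C : ℝ) (hη0 : 0 < η) (hη1 : η < 1) (hC : 0 < C)
    (γ : ℝ) (hγ0 : 0 < γ) (hγ : γ ≤ η / 2) :
    ∃ c > (0 : ℝ), ∃ c' > (0 : ℝ),
      ∀ (pr : Measure (PV d)), IsProbabilityMeasure pr →
      (∀ y : PV d, ∫⁻ x, ENNReal.ofReal (delta d x y) ^ (-η) ∂pr ≤ ENNReal.ofReal C) →
      ∀ (φ : PV d → ℝ), Measurable φ → BddAbove (Set.range fun x => |φ x|) →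
        (∀ y' y'' : PV d,
          |(∫ x, φ x * Real.log (delta d x y') ∂pr) -
              (∫ x, φ x * Real.log (delta d x y'') ∂pr)|
            ≤ c * supNorm d φ * angDist d y' y'' ^ γ) ∧
        MemBgamma d γ (fun y => ∫ x, φ x * Real.log (delta d x y) ∂pr) ∧
        holderNorm d γ (fun y => ∫ x, φ x * Real.log (delta d x y) ∂pr)
          ≤ c' * supNorm d φ := by
  have hγ1 : γ ≤ 1 := by linarith
  have hs2 : (1:ℝ) ≤ Real.sqrt 2 := by
    rw [show (1:ℝ) = Real.sqrt 1 from (Real.sqrt_one).symm]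
    exact Real.sqrt_le_sqrt (by norm_num)
  refine ⟨2 * Real.sqrt 2 * C / γ, by positivity, 2 * Real.sqrt 2 * C / γ + C / η,
    by positivity, ?_⟩
  set c := 2 * Real.sqrt 2 * C / γ with hc_def
  have hc0 : 0 < c := by positivity
  intro pr hprob hmom φ hφ hbdd
  haveI : Nontrivial (V d) := by
    refine ⟨EuclideanSpace.single ⟨0, hd⟩ 1, 0, fun h => ?_⟩
    simpa using congrArg (fun v : V d => v ⟨0, hd⟩) h
  haveI : Nonempty (PV d) := inferInstance
  set M := supNorm d φ with hM_def
  have hMle : ∀ x, |φ x| ≤ M := fun x => le_ciSup hbdd x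
  have hM0 : 0 ≤ M := le_trans (abs_nonneg _) (hMle (Classical.arbitrary _))
  -- a.e. positivity of delta
  have hpos : ∀ y : PV d, ∀ᵐ x ∂pr, 0 < delta d x y := by
    intro y
    have hne : ∫⁻ x, ENNReal.ofReal (delta d x y) ^ (-η) ∂pr ≠ ⊤ :=
      ne_top_of_le_ne_top ENNReal.ofReal_ne_top (hmom y)
    filter_upwards [ae_lt_top (measurable_rpow_delta y (-η)) hne] with x hx
    by_contra h
    push_neg at h
    have h0 : delta d x y = 0 := le_antisymm h (delta_nonneg x y)
    rw [h0, ENNReal.ofReal_zero, ENNReal.zero_rpow_of_neg (by linarith)] at hx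
    exact lt_irrefl _ hx
  -- moment bound with exponent γ
  have hmomγ : ∀ y : PV d, ∫⁻ x, ENNReal.ofReal (delta d x y) ^ (-γ) ∂pr ≤ ENNReal.ofReal C := by
    intro y
    refine le_trans (lintegral_mono fun x => ?_) (hmom y)
    exact ENNReal.rpow_le_rpow_of_exponent_ge
      (ENNReal.ofReal_le_one.mpr (delta_le_one x y)) (by linarith)
  -- lintegral bound for |log delta|
  have hlog : ∀ y : PV d, ∫⁻ x, ENNReal.ofReal |Real.log (delta d x y)| ∂pr
      ≤ ENNReal.ofReal (C / η) := by
    intro y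
    have hpt : ∀ x, ENNReal.ofReal |Real.log (delta d x y)| ≤
        ENNReal.ofReal (1 / η) * ENNReal.ofReal (delta d x y) ^ (-η) := by
      intro x
      rcases eq_or_lt_of_le (delta_nonneg x y) with h | h
      · rw [← h]
        simp
      · have hb := abs_log_le h (delta_le_one x y) hη0
        calc ENNReal.ofReal |Real.log (delta d x y)|
            ≤ ENNReal.ofReal (delta d x y ^ (-η) / η) := ENNReal.ofReal_le_ofReal hb
          _ = ENNReal.ofReal (1 / η) * ENNReal.ofReal (delta d x y ^ (-η)) := by
              rw [← ENNReal.ofReal_mul (by positivity)]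
              congr 1
              ring
          _ = ENNReal.ofReal (1 / η) * ENNReal.ofReal (delta d x y) ^ (-η) := by
              rw [ENNReal.ofReal_rpow_of_pos h]
    calc ∫⁻ x, ENNReal.ofReal |Real.log (delta d x y)| ∂pr
        ≤ ∫⁻ x, ENNReal.ofReal (1 / η) * ENNReal.ofReal (delta d x y) ^ (-η) ∂pr :=
          lintegral_mono hpt
      _ = ENNReal.ofReal (1 / η) * ∫⁻ x, ENNReal.ofReal (delta d x y) ^ (-η) ∂pr :=
          lintegral_const_mul' _ _ ENNReal.ofReal_ne_top
      _ ≤ ENNReal.ofReal (1 / η) * ENNReal.ofReal C := by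
          gcongr
          exact hmom y
      _ = ENNReal.ofReal (C / η) := by
          rw [← ENNReal.ofReal_mul (by positivity)]
          congr 1
          ring
  -- lintegral bound for |φ x * log delta|
  have hprod : ∀ y : PV d, ∫⁻ x, ENNReal.ofReal |φ x * Real.log (delta d x y)| ∂pr
      ≤ ENNReal.ofReal (M * (C / η)) := by
    intro y
    calc ∫⁻ x, ENNReal.ofReal |φ x * Real.log (delta d x y)| ∂pr
        ≤ ∫⁻ x, ENNReal.ofReal M * ENNReal.ofReal |Real.log (delta d x y)| ∂pr := by
          refine lintegral_mono fun x => ?_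
          rw [abs_mul, ← ENNReal.ofReal_mul hM0]
          exact ENNReal.ofReal_le_ofReal
            (mul_le_mul_of_nonneg_right (hMle x) (abs_nonneg _))
      _ = ENNReal.ofReal M * ∫⁻ x, ENNReal.ofReal |Real.log (delta d x y)| ∂pr :=
          lintegral_const_mul' _ _ ENNReal.ofReal_ne_top
      _ ≤ ENNReal.ofReal M * ENNReal.ofReal (C / η) := by
          gcongr
          exact hlog y
      _ = ENNReal.ofReal (M * (C / η)) := by
          rw [← ENNReal.ofReal_mul hM0]
  -- integrability
  have hint : ∀ y : PV d, Integrable (fun x => φ x * Real.log (delta d x y)) pr := by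
    intro y
    have hm : Measurable fun x => φ x * Real.log (delta d x y) :=
      hφ.mul ((measurable_delta y).log)
    refine ⟨hm.aestronglyMeasurable, ?_⟩
    show (∫⁻ x, (‖φ x * Real.log (delta d x y)‖₊ : ℝ≥0∞) ∂pr) < ⊤
    calc ∫⁻ x, (‖φ x * Real.log (delta d x y)‖₊ : ℝ≥0∞) ∂pr
        = ∫⁻ x, ENNReal.ofReal |φ x * Real.log (delta d x y)| ∂pr := by
          simp_rw [← enorm_eq_nnnorm, Real.enorm_eq_ofReal_abs]
      _ ≤ ENNReal.ofReal (M * (C / η)) := hprod y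
      _ < ⊤ := ENNReal.ofReal_lt_top
  -- main Hölder estimate
  have main : ∀ y' y'' : PV d,
      |(∫ x, φ x * Real.log (delta d x y') ∂pr) -
          (∫ x, φ x * Real.log (delta d x y'') ∂pr)|
        ≤ c * M * angDist d y' y'' ^ γ := by
    intro y' y''
    set D := angDist d y' y'' with hD
    have hD0 : 0 ≤ D := angDist_nonneg y' y''
    set K := Real.sqrt 2 * D ^ γ / γ with hK
    have hK0 : 0 ≤ K := by positivity
    have hae : ∀ᵐ x ∂pr,
        ENNReal.ofReal |φ x * Real.log (delta d x y') - φ x * Real.log (delta d x y'')|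
        ≤ ENNReal.ofReal (M * K) *
          (ENNReal.ofReal (delta d x y') ^ (-γ) + ENNReal.ofReal (delta d x y'') ^ (-γ)) := by
      filter_upwards [hpos y', hpos y''] with x h1 h2
      have hlogdiff : |Real.log (delta d x y') - Real.log (delta d x y'')| ≤
          |delta d x y' - delta d x y''| ^ γ *
            (delta d x y' ^ (-γ) + delta d x y'' ^ (-γ)) / γ :=
        abs_log_sub_log_le h1 h2 hγ0 hγ1
      have hdd : |delta d x y' - delta d x y''| ^ γ ≤ Real.sqrt 2 * D ^ γ := by
        calc |delta d x y' - delta d x y''| ^ γ ≤ (Real.sqrt 2 * D) ^ γ :=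
            Real.rpow_le_rpow (abs_nonneg _) (abs_delta_sub_delta_le x y' y'') hγ0.le
          _ = Real.sqrt 2 ^ γ * D ^ γ := Real.mul_rpow (Real.sqrt_nonneg 2) hD0
          _ ≤ Real.sqrt 2 * D ^ γ := by
              have h2' := Real.rpow_le_rpow_of_exponent_le hs2 hγ1
              rw [Real.rpow_one] at h2'
              exact mul_le_mul_of_nonneg_right h2' (Real.rpow_nonneg hD0 γ)
      have hre : |φ x * Real.log (delta d x y') - φ x * Real.log (delta d x y'')| ≤
          (M * K) * (delta d x y' ^ (-γ) + delta d x y'' ^ (-γ)) := by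
        rw [← mul_sub, abs_mul]
        have hsum0 : 0 ≤ delta d x y' ^ (-γ) + delta d x y'' ^ (-γ) := by positivity
        calc |φ x| * |Real.log (delta d x y') - Real.log (delta d x y'')|
            ≤ M * (|delta d x y' - delta d x y''| ^ γ *
                (delta d x y' ^ (-γ) + delta d x y'' ^ (-γ)) / γ) :=
              mul_le_mul (hMle x) hlogdiff (abs_nonneg _) hM0
          _ ≤ M * (Real.sqrt 2 * D ^ γ *
                (delta d x y' ^ (-γ) + delta d x y'' ^ (-γ)) / γ) := by gcongr
          _ = (M * K) * (delta d x y' ^ (-γ) + delta d x y'' ^ (-γ)) := by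
              rw [hK]
              ring
      calc ENNReal.ofReal |φ x * Real.log (delta d x y') - φ x * Real.log (delta d x y'')|
          ≤ ENNReal.ofReal ((M * K) * (delta d x y' ^ (-γ) + delta d x y'' ^ (-γ))) :=
            ENNReal.ofReal_le_ofReal hre
        _ = ENNReal.ofReal (M * K) *
            (ENNReal.ofReal (delta d x y' ^ (-γ)) + ENNReal.ofReal (delta d x y'' ^ (-γ))) := by
            rw [ENNReal.ofReal_mul (by positivity),
              ENNReal.ofReal_add (by positivity) (by positivity)]
        _ = ENNReal.ofReal (M * K) *
            (ENNReal.ofReal (delta d x y') ^ (-γ) + ENNReal.ofReal (delta d x y'') ^ (-γ)) := by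
            rw [ENNReal.ofReal_rpow_of_pos h1, ENNReal.ofReal_rpow_of_pos h2]
    have hlint : ∫⁻ x,
        ENNReal.ofReal |φ x * Real.log (delta d x y') - φ x * Real.log (delta d x y'')| ∂pr
        ≤ ENNReal.ofReal (M * K * (2 * C)) := by
      calc ∫⁻ x,
          ENNReal.ofReal |φ x * Real.log (delta d x y') - φ x * Real.log (delta d x y'')| ∂pr
          ≤ ∫⁻ x, ENNReal.ofReal (M * K) *
              (ENNReal.ofReal (delta d x y') ^ (-γ) + ENNReal.ofReal (delta d x y'') ^ (-γ)) ∂pr :=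
            lintegral_mono_ae hae
        _ = ENNReal.ofReal (M * K) * ∫⁻ x,
              (ENNReal.ofReal (delta d x y') ^ (-γ) + ENNReal.ofReal (delta d x y'') ^ (-γ)) ∂pr :=
            lintegral_const_mul' _ _ ENNReal.ofReal_ne_top
        _ = ENNReal.ofReal (M * K) *
              ((∫⁻ x, ENNReal.ofReal (delta d x y') ^ (-γ) ∂pr) +
                ∫⁻ x, ENNReal.ofReal (delta d x y'') ^ (-γ) ∂pr) := by
            rw [lintegral_add_left (measurable_rpow_delta y' (-γ))]
        _ ≤ ENNReal.ofReal (M * K) * (ENNReal.ofReal C + ENNReal.ofReal C) := by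
            gcongr
            exacts [hmomγ y', hmomγ y'']
        _ = ENNReal.ofReal (M * K * (2 * C)) := by
            rw [← ENNReal.ofReal_add hC.le hC.le, ← ENNReal.ofReal_mul (by positivity)]
            congr 1
            ring
    have h1 := hint y'
    have h2 := hint y''
    have habs : |(∫ x, φ x * Real.log (delta d x y') ∂pr) -
        (∫ x, φ x * Real.log (delta d x y'') ∂pr)|
        ≤ ∫ x, |φ x * Real.log (delta d x y') - φ x * Real.log (delta d x y'')| ∂pr := by
      rw [← integral_sub h1 h2]
      calc |∫ x, (φ x * Real.log (delta d x y') - φ x * Real.log (delta d x y'')) ∂pr|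
          = ‖∫ x, (φ x * Real.log (delta d x y') - φ x * Real.log (delta d x y'')) ∂pr‖ :=
            (Real.norm_eq_abs _).symm
        _ ≤ ∫ x, ‖φ x * Real.log (delta d x y') - φ x * Real.log (delta d x y'')‖ ∂pr :=
            norm_integral_le_integral_norm _
        _ = ∫ x, |φ x * Real.log (delta d x y') - φ x * Real.log (delta d x y'')| ∂pr := by
            simp only [Real.norm_eq_abs]
    have heq : ∫ x, |φ x * Real.log (delta d x y') - φ x * Real.log (delta d x y'')| ∂pr
        = (∫⁻ x, ENNReal.ofReal
            |φ x * Real.log (delta d x y') - φ x * Real.log (delta d x y'')| ∂pr).toReal := by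
      rw [integral_eq_lintegral_of_nonneg_ae
        (f := fun x => |φ x * Real.log (delta d x y') - φ x * Real.log (delta d x y'')|)
        (Eventually.of_forall fun x => abs_nonneg _)
        ((hφ.mul ((measurable_delta y').log)).sub
          (hφ.mul ((measurable_delta y'').log))).abs.aestronglyMeasurable]
    calc |(∫ x, φ x * Real.log (delta d x y') ∂pr) -
        (∫ x, φ x * Real.log (delta d x y'') ∂pr)|
        ≤ ∫ x, |φ x * Real.log (delta d x y') - φ x * Real.log (delta d x y'')| ∂pr := habs
      _ = (∫⁻ x, ENNReal.ofReal
            |φ x * Real.log (delta d x y') - φ x * Real.log (delta d x y'')| ∂pr).toReal := heq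
      _ ≤ (ENNReal.ofReal (M * K * (2 * C))).toReal :=
          ENNReal.toReal_mono ENNReal.ofReal_ne_top hlint
      _ = M * K * (2 * C) := ENNReal.toReal_ofReal (by positivity)
      _ = c * M * D ^ γ := by
          rw [hK, hc_def]
          field_simp
  -- sup bound for d_phi
  have hsup : ∀ y : PV d, |∫ x, φ x * Real.log (delta d x y) ∂pr| ≤ M * (C / η) := by
    intro y
    have heq : ∫ x, |φ x * Real.log (delta d x y)| ∂pr
        = (∫⁻ x, ENNReal.ofReal |φ x * Real.log (delta d x y)| ∂pr).toReal := by
      rw [integral_eq_lintegral_of_nonneg_ae (f := fun x => |φ x * Real.log (delta d x y)|)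
        (Eventually.of_forall fun x => abs_nonneg _)
        (hφ.mul ((measurable_delta y).log)).abs.aestronglyMeasurable]
    calc |∫ x, φ x * Real.log (delta d x y) ∂pr|
        = ‖∫ x, φ x * Real.log (delta d x y) ∂pr‖ := (Real.norm_eq_abs _).symm
      _ ≤ ∫ x, ‖φ x * Real.log (delta d x y)‖ ∂pr := norm_integral_le_integral_norm _
      _ = ∫ x, |φ x * Real.log (delta d x y)| ∂pr := by simp only [Real.norm_eq_abs]
      _ = (∫⁻ x, ENNReal.ofReal |φ x * Real.log (delta d x y)| ∂pr).toReal := heq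
      _ ≤ (ENNReal.ofReal (M * (C / η))).toReal :=
          ENNReal.toReal_mono ENNReal.ofReal_ne_top (hprod y)
      _ = M * (C / η) := ENNReal.toReal_ofReal (by positivity)
  -- ratio bound
  have hratio : ∀ p : PV d × PV d,
      holderRatio d γ (fun y => ∫ x, φ x * Real.log (delta d x y) ∂pr) p ≤ c * M := by
    intro p
    unfold holderRatio
    split_ifs with h
    · exact mul_nonneg hc0.le hM0
    · rw [div_le_iff₀ (Real.rpow_pos_of_pos (angDist_pos_of_ne h) γ)]
      exact main p.1 p.2
  refine ⟨main, ⟨⟨M * (C / η), ?_⟩, ⟨c * M, ?_⟩⟩, ?_⟩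
  · rintro r ⟨y, rfl⟩
    exact hsup y
  · rintro r ⟨p, rfl⟩
    exact hratio p
  · have hsemile : holderSemi d γ (fun y => ∫ x, φ x * Real.log (delta d x y) ∂pr) ≤ c * M :=
      ciSup_le hratio
    have hsupNle : supNorm d (fun y => ∫ x, φ x * Real.log (delta d x y) ∂pr) ≤ M * (C / η) :=
      ciSup_le hsup
    have : M * (C / η) + c * M = (c + C / η) * M := by ring
    calc holderNorm d γ (fun y => ∫ x, φ x * Real.log (delta d x y) ∂pr)
        = supNorm d (fun y => ∫ x, φ x * Real.log (delta d x y) ∂pr) +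
          holderSemi d γ (fun y => ∫ x, φ x * Real.log (delta d x y) ∂pr) := rfl
      _ ≤ M * (C / η) + c * M := add_le_add hsupNle hsemile
      _ = (c + C / η) * M := this
end
end

section
/- There exists an absolute constant c > 0 such that for every γ ∈ (0,1], every integer n ≥ 18 (so that a_n e^{a_n} ≤ 1/2), every integer k ≥ 0 and every y ∈ ℙ(V*), the function χ_{n,k}^y belongs to B_γ and ‖χ_{n,k}^y‖_γ ≤ c · e^{γ k a_n} / a_n^γ. -/
open MeasureTheory Real Filter
open scoped InnerProductSpace ENNReal Topology

noncomputable section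

/-- The uniform distribution function `U(t) = min(max(t,0),1)` on `[0,1]`. -/
def Ufun (t : ℝ) : ℝ := min (max t 0) 1

/-- `a_n = 1 / log n`. -/
def an (n : ℕ) : ℝ := 1 / Real.log n

/-- `U_{n,k}(t) = U((t − (k−1)a_n)/a_n)`. -/
def Unk (n k : ℕ) (t : ℝ) : ℝ := Ufun ((t - ((k : ℝ) - 1) * an n) / an n)

/-- `h_{n,k} = U_{n,k} − U_{n,k+1}`. -/
def hnk (n k : ℕ) (t : ℝ) : ℝ := Unk n k t - Unk n (k + 1) t

open Classical in
/-- `χ_{n,k}^y(x) = h_{n,k}(−log δ(x,y))`, with the convention `log 0 = −∞`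
(so that `χ_{n,k}^y(x) = 0` when `δ(x,y) = 0`). -/
def chi (d n k : ℕ) (y x : PV d) : ℝ :=
  if delta d x y = 0 then 0 else hnk n k (-Real.log (delta d x y))

/- ---------------- auxiliary lemmas ---------------- -/

lemma ufun_nonneg (t : ℝ) : 0 ≤ Ufun t := le_min (le_max_right t 0) zero_le_one

lemma ufun_le_one (t : ℝ) : Ufun t ≤ 1 := min_le_right _ _

lemma ufun_mono {t s : ℝ} (h : t ≤ s) : Ufun t ≤ Ufun s :=
  min_le_min (max_le_max h le_rfl) le_rfl

lemma ufun_one {t : ℝ} (h : 1 ≤ t) : Ufun t = 1 :=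
  min_eq_right (le_trans h (le_max_left _ _))

lemma abs_min_sub_min (a b c : ℝ) : |min a c - min b c| ≤ |a - b| := by
  have h1 : min a c = -max (-a) (-c) := by rw [max_neg_neg, neg_neg]
  have h2 : min b c = -max (-b) (-c) := by rw [max_neg_neg, neg_neg]
  rw [h1, h2]
  have := abs_max_sub_max_le_abs (-b) (-a) (-c)
  calc |-max (-a) (-c) - -max (-b) (-c)| = |max (-b) (-c) - max (-a) (-c)| := by
        congr 1; ring
    _ ≤ |(-b) - (-a)| := this
    _ = |a - b| := by congr 1; ring

lemma ufun_lip (t s : ℝ) : |Ufun t - Ufun s| ≤ |t - s| := by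
  calc |Ufun t - Ufun s| ≤ |max t 0 - max s 0| := abs_min_sub_min _ _ _
    _ ≤ |t - s| := abs_max_sub_max_le_abs t s 0

lemma unk_lip (n k : ℕ) (ha : 0 < an n) (t s : ℝ) :
    |Unk n k t - Unk n k s| ≤ |t - s| / an n := by
  calc |Unk n k t - Unk n k s|
      ≤ |(t - ((k : ℝ) - 1) * an n) / an n - (s - ((k : ℝ) - 1) * an n) / an n| :=
        ufun_lip _ _
    _ = |(t - s) / an n| := by congr 1; ring
    _ = |t - s| / an n := by rw [abs_div, abs_of_pos ha]

lemma hnk_lip (n k : ℕ) (ha : 0 < an n) (t s : ℝ) :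
    |hnk n k t - hnk n k s| ≤ 2 / an n * |t - s| := by
  have h1 := unk_lip n k ha t s
  have h2 := unk_lip n (k + 1) ha t s
  calc |hnk n k t - hnk n k s|
      = |(Unk n k t - Unk n k s) - (Unk n (k+1) t - Unk n (k+1) s)| := by
        unfold hnk; ring_nf
    _ ≤ |Unk n k t - Unk n k s| + |Unk n (k+1) t - Unk n (k+1) s| := abs_sub _ _
    _ ≤ |t - s| / an n + |t - s| / an n := add_le_add h1 h2
    _ = 2 / an n * |t - s| := by field_simp; ring

lemma hnk_nonneg (n k : ℕ) (ha : 0 < an n) (t : ℝ) : 0 ≤ hnk n k t := by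
  have : ((k + 1 : ℕ) : ℝ) - 1 = (k : ℝ) := by push_cast; ring
  unfold hnk Unk
  rw [this, sub_nonneg]
  apply ufun_mono
  apply div_le_div_of_nonneg_right ?_ ha.le
  nlinarith [ha.le]

lemma hnk_le_one (n k : ℕ) (ha : 0 < an n) (t : ℝ) : hnk n k t ≤ 1 := by
  have h1 : Unk n k t ≤ 1 := ufun_le_one _
  have h2 : 0 ≤ Unk n (k + 1) t := ufun_nonneg _
  unfold hnk; linarith

lemma hnk_zero (n k : ℕ) (ha : 0 < an n) {t : ℝ} (ht : ((k : ℝ) + 1) * an n ≤ t) :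
    hnk n k t = 0 := by
  have hk : (0:ℝ) ≤ (k : ℝ) := Nat.cast_nonneg k
  have e1 : Unk n k t = 1 := by
    apply ufun_one
    rw [le_div_iff₀ ha]; nlinarith
  have e2 : Unk n (k + 1) t = 1 := by
    apply ufun_one
    rw [le_div_iff₀ ha]; push_cast; nlinarith
  unfold hnk; rw [e1, e2]; ring

lemma delta_nonneg (d : ℕ) (x y : PV d) : 0 ≤ delta d x y :=
  div_nonneg (abs_nonneg _) (mul_nonneg (norm_nonneg _) (norm_nonneg _))

lemma delta_le_one (d : ℕ) (x y : PV d) : delta d x y ≤ 1 := by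
  have hy := y.rep_nonzero
  have hx := x.rep_nonzero
  have h1 : (0:ℝ) < ‖y.rep‖ * ‖x.rep‖ :=
    mul_pos (norm_pos_iff.mpr hy) (norm_pos_iff.mpr hx)
  rw [delta, div_le_one h1]
  exact abs_real_inner_le_norm _ _

lemma angDist_nonneg (d : ℕ) (x x' : PV d) : 0 ≤ angDist d x x' :=
  div_nonneg (Real.sqrt_nonneg _) (mul_nonneg (norm_nonneg _) (norm_nonneg _))

lemma key_unit {d : ℕ} (f u u' : V d) (hf : ‖f‖ = 1) (hu : ‖u‖ = 1) (hu' : ‖u'‖ = 1) :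
    |⟪f, u⟫_ℝ| ≤ |⟪f, u'⟫_ℝ| + Real.sqrt (1 - ⟪u, u'⟫_ℝ ^ 2) := by
  set c : ℝ := ⟪u, u'⟫_ℝ with hc
  have h1 : ⟪f, u⟫_ℝ = c * ⟪f, u'⟫_ℝ + ⟪f, u - c • u'⟫_ℝ := by
    rw [inner_sub_right, real_inner_smul_right]; ring
  have h2 : ‖u - c • u'‖ ^ 2 = 1 - c ^ 2 := by
    rw [norm_sub_sq_real, real_inner_smul_right, norm_smul, hu, hu', Real.norm_eq_abs]
    simp only [mul_one, one_pow, sq_abs]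
    ring
  have h3 : |⟪f, u - c • u'⟫_ℝ| ≤ Real.sqrt (1 - c ^ 2) := by
    calc |⟪f, u - c • u'⟫_ℝ| ≤ ‖f‖ * ‖u - c • u'‖ := abs_real_inner_le_norm _ _
      _ = ‖u - c • u'‖ := by rw [hf, one_mul]
      _ = Real.sqrt (‖u - c • u'‖ ^ 2) := (Real.sqrt_sq (norm_nonneg _)).symm
      _ = Real.sqrt (1 - c ^ 2) := by rw [h2]
  have hcle : |c| ≤ 1 := by
    calc |c| ≤ ‖u‖ * ‖u'‖ := abs_real_inner_le_norm _ _
      _ = 1 := by rw [hu, hu', one_mul]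
  calc |⟪f, u⟫_ℝ| ≤ |c * ⟪f, u'⟫_ℝ| + |⟪f, u - c • u'⟫_ℝ| := by
        rw [h1]; exact abs_add_le _ _
    _ ≤ |⟪f, u'⟫_ℝ| + Real.sqrt (1 - c ^ 2) := by
        rw [abs_mul]
        have : |c| * |⟪f, u'⟫_ℝ| ≤ 1 * |⟪f, u'⟫_ℝ| :=
          mul_le_mul_of_nonneg_right hcle (abs_nonneg _)
        linarith [h3]

lemma delta_eq_unit {d : ℕ} (x y : PV d) :
    delta d x y = |⟪‖y.rep‖⁻¹ • y.rep, ‖x.rep‖⁻¹ • x.rep⟫_ℝ| := by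
  have hy : (0:ℝ) < ‖y.rep‖ := norm_pos_iff.mpr y.rep_nonzero
  have hx : (0:ℝ) < ‖x.rep‖ := norm_pos_iff.mpr x.rep_nonzero
  rw [delta, real_inner_smul_left, real_inner_smul_right, abs_mul, abs_mul,
    abs_inv, abs_inv, abs_norm, abs_norm]
  field_simp

lemma angDist_eq_unit {d : ℕ} (x x' : PV d) :
    angDist d x x' =
      Real.sqrt (1 - ⟪‖x.rep‖⁻¹ • x.rep, ‖x'.rep‖⁻¹ • x'.rep⟫_ℝ ^ 2) := by
  have ha : (0:ℝ) < ‖x.rep‖ := norm_pos_iff.mpr x.rep_nonzero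
  have hb : (0:ℝ) < ‖x'.rep‖ := norm_pos_iff.mpr x'.rep_nonzero
  have hcs : |⟪x.rep, x'.rep⟫_ℝ| ≤ ‖x.rep‖ * ‖x'.rep‖ := abs_real_inner_le_norm _ _
  have hN : (0:ℝ) ≤ ‖x.rep‖ ^ 2 * ‖x'.rep‖ ^ 2 - ⟪x.rep, x'.rep⟫_ℝ ^ 2 := by
    nlinarith [abs_nonneg ⟪x.rep, x'.rep⟫_ℝ, sq_abs ⟪x.rep, x'.rep⟫_ℝ]
  rw [real_inner_smul_left, real_inner_smul_right]
  have h1 : 1 - (‖x.rep‖⁻¹ * (‖x'.rep‖⁻¹ * ⟪x.rep, x'.rep⟫_ℝ)) ^ 2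
      = (‖x.rep‖ ^ 2 * ‖x'.rep‖ ^ 2 - ⟪x.rep, x'.rep⟫_ℝ ^ 2) / (‖x.rep‖ * ‖x'.rep‖) ^ 2 := by
    field_simp
  rw [h1, Real.sqrt_div hN, Real.sqrt_sq (mul_nonneg ha.le hb.le), angDist]

lemma delta_lip {d : ℕ} (x x' y : PV d) :
    |delta d x y - delta d x' y| ≤ angDist d x x' := by
  rw [delta_eq_unit x y, delta_eq_unit x' y, angDist_eq_unit x x']
  set f := ‖y.rep‖⁻¹ • y.rep
  set u := ‖x.rep‖⁻¹ • x.rep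
  set u' := ‖x'.rep‖⁻¹ • x'.rep
  have hf : ‖f‖ = 1 := norm_smul_inv_norm y.rep_nonzero
  have hu : ‖u‖ = 1 := norm_smul_inv_norm x.rep_nonzero
  have hu' : ‖u'‖ = 1 := norm_smul_inv_norm x'.rep_nonzero
  rw [abs_sub_le_iff]
  constructor
  · linarith [key_unit f u u' hf hu hu']
  · have := key_unit f u' u hf hu' hu
    rw [real_inner_comm u u'] at this
    linarith

lemma log_lip {m a b : ℝ} (hm : 0 < m) (ha : m ≤ a) (hb : m ≤ b) :
    |Real.log a - Real.log b| ≤ m⁻¹ * |a - b| := by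
  have ha0 : 0 < a := lt_of_lt_of_le hm ha
  have hb0 : 0 < b := lt_of_lt_of_le hm hb
  have key : ∀ u v : ℝ, m ≤ u → m ≤ v →
      Real.log u - Real.log v ≤ m⁻¹ * |u - v| := by
    intro u v hu hv
    have hu0 : 0 < u := lt_of_lt_of_le hm hu
    have hv0 : 0 < v := lt_of_lt_of_le hm hv
    have h1 : Real.log u - Real.log v = Real.log (u / v) := by
      rw [Real.log_div (ne_of_gt hu0) (ne_of_gt hv0)]
    have h2 : Real.log (u / v) ≤ u / v - 1 :=
      Real.log_le_sub_one_of_pos (div_pos hu0 hv0)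
    have h3 : u / v - 1 = (u - v) / v := by field_simp
    have h4 : (u - v) / v ≤ |u - v| / m :=
      div_le_div₀ (abs_nonneg _) (le_abs_self _) hm hv
    rw [h1]
    calc Real.log (u / v) ≤ u / v - 1 := h2
      _ = (u - v) / v := h3
      _ ≤ |u - v| / m := h4
      _ = m⁻¹ * |u - v| := by ring
  rw [abs_sub_le_iff]
  exact ⟨key a b ha hb, by rw [abs_sub_comm]; exact key b a hb ha⟩

lemma chi_eq_clamp {d : ℕ} (n k : ℕ) (ha : 0 < an n) (y x : PV d) :
    chi d n k y x =
      hnk n k (-Real.log (max (delta d x y) (Real.exp (-(((k : ℝ) + 1) * an n))))) := by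
  classical
  set m := Real.exp (-(((k : ℝ) + 1) * an n)) with hm
  have hm0 : 0 < m := Real.exp_pos _
  by_cases h0 : delta d x y = 0
  · rw [chi, if_pos h0, h0, max_eq_right hm0.le, hm, Real.log_exp, neg_neg]
    exact (hnk_zero n k ha le_rfl).symm
  · have hd0 : 0 < delta d x y := lt_of_le_of_ne (delta_nonneg d x y) (Ne.symm h0)
    rw [chi, if_neg h0]
    rcases le_total m (delta d x y) with hcase | hcase
    · rw [max_eq_left hcase]
    · rw [max_eq_right hcase]
      have h1 : -Real.log (delta d x y) ≥ ((k : ℝ) + 1) * an n := by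
        have := Real.log_le_log hd0 hcase
        rw [hm, Real.log_exp] at this
        linarith
      rw [hnk_zero n k ha h1, hm, Real.log_exp, neg_neg, hnk_zero n k ha le_rfl]

lemma chi_mem {d : ℕ} (n k : ℕ) (ha : 0 < an n) (y x : PV d) :
    0 ≤ chi d n k y x ∧ chi d n k y x ≤ 1 := by
  rw [chi_eq_clamp n k ha y x]
  exact ⟨hnk_nonneg n k ha _, hnk_le_one n k ha _⟩

lemma chi_lip {d : ℕ} (n k : ℕ) (ha : 0 < an n) (y x x' : PV d) :
    |chi d n k y x - chi d n k y x'|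
      ≤ 2 / an n * Real.exp (((k : ℝ) + 1) * an n) * angDist d x x' := by
  set m := Real.exp (-(((k : ℝ) + 1) * an n)) with hm
  have hm0 : 0 < m := Real.exp_pos _
  set M := max (delta d x y) m with hM
  set M' := max (delta d x' y) m with hM'
  have hMm : m ≤ M := le_max_right _ _
  have hM'm : m ≤ M' := le_max_right _ _
  rw [chi_eq_clamp n k ha y x, chi_eq_clamp n k ha y x']
  calc |hnk n k (-Real.log M) - hnk n k (-Real.log M')|
      ≤ 2 / an n * |(-Real.log M) - (-Real.log M')| := hnk_lip n k ha _ _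
    _ = 2 / an n * |Real.log M - Real.log M'| := by rw [abs_sub_comm]; congr 1; ring
    _ ≤ 2 / an n * (m⁻¹ * |M - M'|) := by
        apply mul_le_mul_of_nonneg_left (log_lip hm0 hMm hM'm)
        positivity
    _ ≤ 2 / an n * (m⁻¹ * |delta d x y - delta d x' y|) := by
        apply mul_le_mul_of_nonneg_left ?_ (by positivity)
        apply mul_le_mul_of_nonneg_left ?_ (by positivity)
        exact abs_max_sub_max_le_abs _ _ _
    _ ≤ 2 / an n * (m⁻¹ * angDist d x x') := by
        apply mul_le_mul_of_nonneg_left ?_ (by positivity)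
        apply mul_le_mul_of_nonneg_left (delta_lip x x' y) (by positivity)
    _ = 2 / an n * Real.exp (((k : ℝ) + 1) * an n) * angDist d x x' := by
        rw [hm, ← Real.exp_neg, neg_neg]; ring

/-- Hölder norm of the partition functions (Lemma 3.7 of Xiao–Grama–Liu): there is an
absolute constant `c > 0` such that for `γ ∈ (0,1]`, `n ≥ 18`, `k ≥ 0` and
`y ∈ ℙ(V*)`, `χ_{n,k}^y ∈ B_γ` and `‖χ_{n,k}^y‖_γ ≤ c e^{γ k a_n} / a_n^γ`. -/
theorem holder_norm_chi :
    ∃ c > (0 : ℝ), ∀ (γ : ℝ), 0 < γ → γ ≤ 1 → ∀ (n : ℕ), 18 ≤ n → ∀ (k : ℕ),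
      ∀ (d : ℕ), 1 ≤ d → ∀ y : PV d,
        MemBgamma d γ (chi d n k y) ∧
          holderNorm d γ (chi d n k y)
            ≤ c * Real.exp (γ * k * an n) / an n ^ γ := by
  refine ⟨2 * Real.exp 1 + 1, by positivity, ?_⟩
  intro γ hγ0 hγ1 n hn k d hd y
  -- nonemptiness of the projective space
  have hne : Nonempty (PV d) := by
    refine ⟨Projectivization.mk ℝ (EuclideanSpace.single (⟨0, hd⟩ : Fin d) (1:ℝ)) ?_⟩
    intro h
    have := congrArg (fun v : V d => v (⟨0, hd⟩ : Fin d)) h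
    simp [EuclideanSpace.single_apply] at this
  -- basic facts about an n
  have hn18 : (18:ℝ) ≤ (n : ℝ) := by exact_mod_cast hn
  have hn0 : (0:ℝ) < (n : ℝ) := by linarith
  have hlog1 : (1:ℝ) ≤ Real.log n := by
    rw [Real.le_log_iff_exp_le hn0]
    have := Real.exp_one_lt_d9
    linarith
  have hlogpos : (0:ℝ) < Real.log n := lt_of_lt_of_le one_pos hlog1
  have hA0 : 0 < an n := div_pos one_pos hlogpos
  have hA1 : an n ≤ 1 := by rw [an, div_le_one hlogpos]; exact hlog1
  set A := an n with hAdef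
  have hkA : 0 ≤ (k:ℝ) * A := mul_nonneg (Nat.cast_nonneg k) hA0.le
  -- the Lipschitz constant
  set L : ℝ := 2 / A * Real.exp (((k:ℝ) + 1) * A) with hL
  have hL0 : 0 < L := by positivity
  -- the main quantity
  set X : ℝ := Real.exp (γ * (k:ℝ) * A) / A ^ γ with hX
  have hAγ : (0:ℝ) < A ^ γ := Real.rpow_pos_of_pos hA0 γ
  have hX0 : 0 < X := by positivity
  have hX1 : 1 ≤ X := by
    rw [hX, le_div_iff₀ hAγ, one_mul]
    calc A ^ γ ≤ 1 := Real.rpow_le_one hA0.le hA1 hγ0.le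
      _ ≤ Real.exp (γ * (k:ℝ) * A) := by
          rw [← Real.exp_zero]
          apply Real.exp_le_exp.mpr
          positivity
  -- bound on L^γ
  have hLγ : L ^ γ ≤ 2 * Real.exp 1 * X := by
    have hLeq : L = 2 * Real.exp A * Real.exp ((k:ℝ) * A) / A := by
      rw [hL]
      rw [show ((k:ℝ) + 1) * A = A + (k:ℝ) * A by ring, Real.exp_add]
      ring
    have h1 : (1:ℝ) ≤ 2 * Real.exp A := by
      have : (1:ℝ) ≤ Real.exp A := by
        rw [← Real.exp_zero]; exact Real.exp_le_exp.mpr hA0.le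
      linarith
    have h2 : 2 * Real.exp A ≤ 2 * Real.exp 1 := by
      have := Real.exp_le_exp.mpr hA1
      linarith
    have h3 : (2 * Real.exp A) ^ γ ≤ 2 * Real.exp 1 := by
      calc (2 * Real.exp A) ^ γ ≤ (2 * Real.exp A) ^ (1:ℝ) :=
            Real.rpow_le_rpow_of_exponent_le h1 hγ1
        _ = 2 * Real.exp A := Real.rpow_one _
        _ ≤ 2 * Real.exp 1 := h2
    have h4 : (Real.exp ((k:ℝ) * A)) ^ γ = Real.exp (γ * (k:ℝ) * A) := by
      rw [← Real.exp_mul]; congr 1; ring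
    rw [hLeq, Real.div_rpow (by positivity) hA0.le,
      Real.mul_rpow (by positivity) (Real.exp_pos _).le, h4, hX]
    rw [← mul_div_assoc]
    gcongr
  -- sup-norm bound
  have hchi : ∀ x, |chi d n k y x| ≤ 1 := by
    intro x
    obtain ⟨h1, h2⟩ := chi_mem n k hA0 y x
    rw [abs_of_nonneg h1]; exact h2
  have hsup : supNorm d (chi d n k y) ≤ X := by
    apply ciSup_le
    intro x
    exact le_trans (hchi x) hX1
  -- Hölder ratio bound
  have hratio : ∀ p : PV d × PV d,
      holderRatio d γ (chi d n k y) p ≤ 2 * Real.exp 1 * X := by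
    intro p
    rw [holderRatio]
    split_ifs with hp
    · positivity
    · set D := angDist d p.1 p.2 with hD
      have hD0 : 0 ≤ D := angDist_nonneg d p.1 p.2
      rcases eq_or_lt_of_le hD0 with hDz | hDpos
      · rw [← hDz, Real.zero_rpow (ne_of_gt hγ0), div_zero]
        positivity
      · have hdiff : |chi d n k y p.1 - chi d n k y p.2| ≤ L * D := by
          have := chi_lip n k hA0 y p.1 p.2
          rw [hL]; exact this
        have hdiff1 : |chi d n k y p.1 - chi d n k y p.2| ≤ 1 := by
          obtain ⟨a1, a2⟩ := chi_mem n k hA0 y p.1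
          obtain ⟨b1, b2⟩ := chi_mem n k hA0 y p.2
          rw [abs_sub_le_iff]; constructor <;> linarith
        have hLD0 : 0 < L * D := mul_pos hL0 hDpos
        have hmain : |chi d n k y p.1 - chi d n k y p.2| ≤ (L * D) ^ γ := by
          rcases le_total (L * D) 1 with hc | hc
          · calc |chi d n k y p.1 - chi d n k y p.2| ≤ L * D := hdiff
              _ = (L * D) ^ (1:ℝ) := (Real.rpow_one _).symm
              _ ≤ (L * D) ^ γ := Real.rpow_le_rpow_of_exponent_ge hLD0 hc hγ1
          · calc |chi d n k y p.1 - chi d n k y p.2| ≤ 1 := hdiff1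
              _ = (L * D) ^ (0:ℝ) := (Real.rpow_zero _).symm
              _ ≤ (L * D) ^ γ := Real.rpow_le_rpow_of_exponent_le hc hγ0.le
        have hDγ : (0:ℝ) < D ^ γ := Real.rpow_pos_of_pos hDpos γ
        calc |chi d n k y p.1 - chi d n k y p.2| / D ^ γ
            ≤ (L * D) ^ γ / D ^ γ := by gcongr
          _ = L ^ γ := by
              rw [Real.mul_rpow hL0.le hDpos.le, mul_div_assoc,
                div_self (ne_of_gt hDγ), mul_one]
          _ ≤ 2 * Real.exp 1 * X := hLγ
  have hsemi : holderSemi d γ (chi d n k y) ≤ 2 * Real.exp 1 * X :=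
    ciSup_le hratio
  refine ⟨⟨⟨1, ?_⟩, ⟨2 * Real.exp 1 * X, ?_⟩⟩, ?_⟩
  · rintro v ⟨x, rfl⟩; exact hchi x
  · rintro v ⟨p, rfl⟩; exact hratio p
  · have : (2 * Real.exp 1 + 1) * Real.exp (γ * ↑k * A) / A ^ γ
        = 2 * Real.exp 1 * X + X := by
      rw [hX]; field_simp
    rw [holderNorm, this]
    linarith
end
end
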